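/- If A is a consequence of Γ over an atomic base B in the miB-eS sense, then A is a consequence of Γ over every extension C of B (monotonicity of base-extension semantics). -/
import Mathlib


/-- Propositional atoms: `⊥` and countably many atoms `p n`. -/
inductive PAtom : Type
  | bot
  | p (n : ℕ)
deriving DecidableEq

/-- Formulas of the propositional language. -/
inductive Formula : Type
  | atom (a : PAtom)
  | and (A B : Formula)
  | or (A B : Formula)
  | imp (A B : Formula)
deriving DecidableEq

/-- Higher-level atomic rules: a rule has a list of premises, each of which may
discharge a list of lower-level rules, and has an atomic conclusion.
A level-0 rule (axiom) is `mk [] a`. -/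
inductive AtomicRule : Type
  | mk (prems : List (List AtomicRule × PAtom)) (concl : PAtom)

/-- The atomic explosion rules: from `⊥` infer any atom. -/
def AE : Set AtomicRule := { r | ∃ a, r = AtomicRule.mk [([], PAtom.bot)] a }

/-- An atomic base is a set of atomic rules containing atomic explosion. -/
def IsBase (B : Set AtomicRule) : Prop := AE ⊆ B

/-- Atomic derivability: `Der B Γ a` means the atom `a` is derivable from the assumed
atoms in `Γ` using the rules of `B` (rules discharged by an application of a
higher-level rule are temporarily added to the base). -/
inductive Der : Set AtomicRule → Set PAtom → PAtom → Prop
  | assum {B : Set AtomicRule} {Γ : Set PAtom} {a : PAtom} : a ∈ Γ → Der B Γ a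
  | app {B : Set AtomicRule} {Γ : Set PAtom} (prems : List (List AtomicRule × PAtom)) (a : PAtom) :
      AtomicRule.mk prems a ∈ B →
      (∀ pr ∈ prems, Der (B ∪ { r | r ∈ pr.1 }) Γ pr.2) →
      Der B Γ a

/-- The miB-eS forcing relation `⊩_B A` (consequence with empty antecedent):
atoms by atomic derivability, `∧` by both conjuncts, `∨` by one disjunct,
`→` by consequence over all extensions of the base. -/
def Force : Set AtomicRule → Formula → Prop
  | B, .atom a => Der B ∅ a
  | B, .and A C => Force B A ∧ Force B C
  | B, .or A C => Force B A ∨ Force B C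
  | B, .imp A C => ∀ X : Set AtomicRule, B ⊆ X → Force X A → Force X C

/-- The miB-eS consequence relation `Γ ⊩_B A`. -/
def Cons (B : Set AtomicRule) (Γ : Finset Formula) (A : Formula) : Prop :=
  if Γ = ∅ then Force B A
  else ∀ X : Set AtomicRule, B ⊆ X → (∀ G ∈ Γ, Force X G) → Force X A

lemma Der_mono {B : Set AtomicRule} {Γ : Set PAtom} {a : PAtom}
    (h : Der B Γ a) : ∀ {C : Set AtomicRule}, B ⊆ C → Der C Γ a := by
  induction h with
  | assum h => exact fun _ => Der.assum h
  | app prems a hmem hprems ih =>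
      intro C hBC
      exact Der.app prems a (hBC hmem) fun pr hpr =>
        ih pr hpr (Set.union_subset_union_left _ hBC)

lemma Force_mono {B C : Set AtomicRule} (hBC : B ⊆ C) {A : Formula}
    (h : Force B A) : Force C A := by
  induction A with
  | atom a => exact Der_mono h hBC
  | and A B ihA ihB => exact ⟨ihA h.1, ihB h.2⟩
  | or A B ihA ihB => exact h.elim (fun x => Or.inl (ihA x)) (fun x => Or.inr (ihB x))
  | imp A B ihA ihB => exact fun X hX hA => h X (hBC.trans hX) hA

/-- if `Γ ⊩_B A` in the miB-eS sense, then `Γ ⊩_C A` for every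
extension `C ⊇ B` (monotonicity of base-extension semantics). -/
theorem miBeS_monotone (B : Set AtomicRule) (hB : IsBase B) (Γ : Finset Formula)
    (A : Formula) (h : Cons B Γ A) :
    ∀ C : Set AtomicRule, B ⊆ C → Cons C Γ A := by
  intro C hBC
  unfold Cons at *
  split_ifs at * with hΓ
  · exact Force_mono hBC h
  · exact fun X hX hG => h X (hBC.trans hX) hG
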